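/- arXiv:2503.04383 — 6 statements merged into one kernel-verified Lean document; each statement's English description precedes it below -/
import Mathlib

section
/- In a (noncommutative) ring, if elements a and b satisfy the commutation relation ab - ba = b^2, then for every positive integer q one has (a+b)^q = a^{q-1}(a + q·b). -/
/-- In a (noncommutative) ring, if `a*b - b*a = b^2`, then for every positive
integer `q` one has `(a+b)^q = a^(q-1) * (a + q•b)`. -/
theorem stmt0 (R : Type*) [Ring R] (a b : R) (h : a * b - b * a = b ^ 2) :
    ∀ q : ℕ, 1 ≤ q → (a + b) ^ q = a ^ (q - 1) * (a + q • b) := by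
  have hba : b * a = a * b - b ^ 2 := by rw [← h]; abel
  have key : b * (a + b) = a * b := by
    rw [mul_add, hba, sq]; abel
  intro q hq
  induction q with
  | zero => omega
  | succ n ih =>
    rcases Nat.eq_or_lt_of_le hq with h1 | h1
    · simp [← h1]
    · have hn : 1 ≤ n := by omega
      have := ih hn
      have hn1 : n - 1 + 1 = n := Nat.succ_pred_eq_of_pos hn
      calc (a + b) ^ (n + 1) = (a + b) ^ n * (a + b) := pow_succ _ _
        _ = a ^ (n - 1) * (a + n • b) * (a + b) := by rw [this]
        _ = a ^ (n - 1) * (a * (a + b) + n • (b * (a + b))) := by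
            rw [mul_assoc]; congr 1; rw [add_mul, smul_mul_assoc]
        _ = a ^ (n - 1) * (a * (a + (n + 1) • b)) := by
            rw [key]; congr 1
            rw [mul_add, mul_add, add_smul, one_smul, ← mul_smul_comm, mul_add]
            abel
        _ = a ^ (n + 1 - 1) * (a + (n + 1) • b) := by
            rw [← mul_assoc, ← pow_succ, hn1]; norm_num
end

section
/- In a ring where a and b satisfy ab - ba = b^2, one has b·(a+b)^N = a^N·b for every natural number N. -/
/-- In a ring where `a*b - b*a = b^2`, one has `b·(a+b)^N = a^N·b` for every `N`. -/
theorem stmt1 (R : Type*) [Ring R] (a b : R) (h : a * b - b * a = b ^ 2) (N : ℕ) :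
    b * (a + b) ^ N = a ^ N * b := by
  have key : b * (a + b) = a * b := by
    have := sub_eq_iff_eq_add.mp h
    rw [this]; noncomm_ring
  induction N with
  | zero => simp
  | succ n ih =>
    calc b * (a + b) ^ (n + 1) = (b * (a + b)) * (a + b) ^ n := by
          rw [pow_succ']; rw [mul_assoc]
    _ = a * (b * (a + b) ^ n) := by rw [key, mul_assoc]
    _ = a ^ (n + 1) * b := by rw [ih, pow_succ', mul_assoc]
end

section
/- In a ring where a and b satisfy ab - ba = b^2, for every polynomial S and its formal derivative S', one has a·S(b) = S(b)·a + b^2·S'(b). -/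
lemma aux_pow (R : Type*) [Ring R] (a b : R) (h : a * b - b * a = b ^ 2) (n : ℕ) :
    a * b ^ n = b ^ n * a + n * b ^ (n + 1) := by
  induction n with
  | zero => simp
  | succ n ih =>
    have hab : a * b = b * a + b ^ 2 := by
      have := sub_eq_iff_eq_add.mp h; rw [add_comm] at this; exact this
    calc a * b ^ (n + 1) = (a * b ^ n) * b := by rw [mul_assoc, ← pow_succ]
    _ = (b ^ n * a + n * b ^ (n + 1)) * b := by rw [ih]
    _ = b ^ n * (a * b) + n * (b ^ (n + 1) * b) := by
        rw [add_mul, mul_assoc, mul_assoc]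
    _ = b ^ n * (b * a + b ^ 2) + n * b ^ (n + 2) := by rw [hab, ← pow_succ]
    _ = b ^ (n + 1) * a + (↑(n + 1)) * b ^ (n + 2) := by
        rw [mul_add, ← mul_assoc, ← pow_succ, ← pow_add, Nat.cast_succ, add_mul,
          one_mul, add_assoc, add_comm (b ^ (n + 2))]

/-- In a ring where `a*b - b*a = b^2`, for every polynomial `S` (with central,
i.e. integer, coefficients) one has `a·S(b) = S(b)·a + b²·S'(b)`. -/
theorem stmt2 (R : Type*) [Ring R] (a b : R) (h : a * b - b * a = b ^ 2)
    (S : Polynomial ℤ) :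
    a * Polynomial.aeval b S =
      Polynomial.aeval b S * a + b ^ 2 * Polynomial.aeval b (Polynomial.derivative S) := by
  induction S using Polynomial.induction_on' with
  | add p q hp hq =>
    simp only [map_add, Polynomial.derivative_add]
    rw [mul_add, hp, hq, add_mul, mul_add]; abel
  | monomial n c =>
    have hc : ∀ x : R, Commute (c : R) x := fun x => Int.cast_commute c x
    rw [Polynomial.derivative_monomial]
    simp only [Polynomial.aeval_monomial, algebraMap_int_eq, eq_intCast, Int.cast_mul,
      Int.cast_natCast]
    cases n with
    | zero => simp [(hc a).eq]
    | succ m =>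
      have hcomm : Commute ((c:R) * ((m+1:ℕ):R)) (b^2) :=
        (hc _).mul_left (Nat.cast_commute _ _)
      calc a * ((c:R) * b ^ (m + 1)) = (c:R) * (a * b ^ (m + 1)) := by
            rw [← mul_assoc, ← (hc a).eq, mul_assoc]
      _ = (c:R) * (b ^ (m + 1) * a) + (c:R) * (((m+1 : ℕ) : R) * b ^ (m + 2)) := by
            rw [aux_pow R a b h, mul_add]
      _ = (c:R) * b ^ (m + 1) * a
            + b ^ 2 * ((c:R) * ((m+1 : ℕ) : R) * b ^ (m + 1 - 1)) := by
            have key : (c:R) * (((m+1:ℕ):R) * b ^ (m+2))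
                = b^2 * ((c:R) * ((m+1:ℕ):R) * b ^ m) := by
              rw [← mul_assoc, show m+2 = 2+m by omega, pow_add (a := b) (m := 2),
                ← mul_assoc, hcomm.eq, mul_assoc]
            rw [show m + 1 - 1 = m from rfl, key, ← mul_assoc]
end

section
/- Let E be a module over a ring with two commuting-up-to-b² operators a and b, with b injective, and suppose x ∈ E satisfies (a+b)^N x = 0 for some N. If a is injective on E, then x = 0. -/
/-! `b` intertwines `a + b` with `a`, hence `(a + b)^N` with `a^N`; since `b` and `a^N` are
injective, so is `(a + b)^N`. -/

theorem SemiconjBy.add_right_of_sub_eq_mul {R : Type*} [Ring R] {a b : R}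
    (h : a * b - b * a = b * b) : SemiconjBy b (a + b) a := by
  rw [SemiconjBy, mul_add, ← h]
  abel

theorem Module.End.injective_of_semiconjBy {R M : Type*} [Semiring R] [AddCommMonoid M]
    [Module R M] {b f g : Module.End R M} (hbfg : SemiconjBy b f g)
    (hg : Function.Injective ⇑g) (hb : Function.Injective ⇑b) : Function.Injective ⇑f := by
  have hbf : Function.Injective ⇑(b * f) := by
    rw [hbfg.eq, Module.End.coe_mul]
    exact hg.comp hb
  rw [Module.End.coe_mul] at hbf
  exact hbf.of_comp

/-- If `a`, `b` are injective additive endomorphisms of an abelian group `E`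
with `a∘b - b∘a = b∘b`, and `(a+b)^N x = 0`, then `x = 0`. -/
theorem stmt4 (E : Type*) [AddCommGroup E] (a b : Module.End ℤ E)
    (h : a * b - b * a = b * b)
    (ha : Function.Injective a) (hb : Function.Injective b)
    (N : ℕ) (x : E) (hx : ((a + b) ^ N) x = 0) : x = 0 := by
  have hpow : Function.Injective ⇑((a + b) ^ N) :=
    Module.End.injective_of_semiconjBy ((SemiconjBy.add_right_of_sub_eq_mul h).pow_right N)
      (by rw [Module.End.coe_pow]; exact ha.iterate N) hb
  exact hpow (hx.trans (map_zero _).symm)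
end

section
/- For a formal power series S(b) = Σ c_p b^p with radius-type bound |c_p| ≤ C·R^p·p! for some R > 1, the action on a convergent power series f(s) = Σ γ_q s^q defined by S(b)[f] = Σ_n (1/n!)·(Σ_{p=0}^n (n-p)!·c_p·γ_{n-p})·s^n produces a power series with positive radius of convergence. -/
/- Since `p! (n-p)! ≤ n!`, the `n`-th coefficient of `S(b)[f]` is bounded by the `n`-th coefficient
of the Cauchy product of the Borel transform `Σ |c_p|/p! · b^p` with `Σ |γ_q| s^q`. The hypothesis on
`c` makes the Borel transform a geometric-type series, so both factors converge for small `r`, and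
so does their Cauchy product. -/

open Finset

theorem norm_factorial_inv_mul_sum_le {𝕜 : Type*} [RCLike 𝕜] (c γ : ℕ → 𝕜) (n : ℕ) :
    ‖(n.factorial : 𝕜)⁻¹ * ∑ p ∈ range (n + 1), ((n - p).factorial : 𝕜) * c p * γ (n - p)‖ ≤
      ∑ p ∈ range (n + 1), ‖c p‖ / p.factorial * ‖γ (n - p)‖ := by
  rw [norm_mul, norm_inv, RCLike.norm_natCast, ← div_eq_inv_mul, div_le_iff₀ (by positivity),
    sum_mul]
  refine (norm_sum_le _ _).trans (sum_le_sum fun p hp => ?_)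
  have hfac : ((n - p).factorial * p.factorial : ℝ) ≤ n.factorial := by
    rw [mul_comm]
    exact_mod_cast Nat.le_of_dvd n.factorial_pos
      (Nat.factorial_mul_factorial_dvd_factorial (mem_range_succ_iff.mp hp))
  rw [norm_mul, norm_mul, RCLike.norm_natCast]
  calc ((n - p).factorial : ℝ) * ‖c p‖ * ‖γ (n - p)‖
      = ((n - p).factorial * p.factorial : ℝ) * (‖c p‖ / p.factorial * ‖γ (n - p)‖) := by
        field_simp
    _ ≤ n.factorial * (‖c p‖ / p.factorial * ‖γ (n - p)‖) := by gcongr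
    _ = _ := mul_comm _ _

theorem summable_norm_factorial_inv_mul_sum_mul_pow {𝕜 : Type*} [RCLike 𝕜] (c γ : ℕ → 𝕜)
    {r : ℝ} (hr : 0 ≤ r) (hc : Summable fun p => ‖c p‖ / p.factorial * r ^ p)
    (hγ : Summable fun q => ‖γ q‖ * r ^ q) :
    Summable fun n => ‖(n.factorial : 𝕜)⁻¹ *
      ∑ p ∈ range (n + 1), ((n - p).factorial : 𝕜) * c p * γ (n - p)‖ * r ^ n := by
  refine .of_nonneg_of_le (fun n => by positivity) (fun n => ?_)
    (summable_sum_mul_range_of_summable_norm' hc.abs hc hγ.abs hγ)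
  calc _ ≤ (∑ p ∈ range (n + 1), ‖c p‖ / p.factorial * ‖γ (n - p)‖) * r ^ n := by
        gcongr
        exact norm_factorial_inv_mul_sum_le c γ n
    _ = ∑ p ∈ range (n + 1), ‖c p‖ / p.factorial * r ^ p * (‖γ (n - p)‖ * r ^ (n - p)) := by
        rw [sum_mul]
        refine sum_congr rfl fun p hp => ?_
        rw [← pow_sub_mul_pow r (mem_range_succ_iff.mp hp)]
        ring

theorem stmt5_general (c γ : ℕ → ℂ) (R C : ℝ)
    (hc : ∀ p : ℕ, ‖c p‖ ≤ C * R ^ p * p.factorial)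
    (hγ : ∃ ρ : ℝ, 0 < ρ ∧ Summable fun q : ℕ => ‖γ q‖ * ρ ^ q) :
    ∃ r : ℝ, 0 < r ∧ Summable fun n : ℕ =>
      ‖(n.factorial : ℂ)⁻¹ *
        ∑ p ∈ Finset.range (n + 1), ((n - p).factorial : ℂ) * c p * γ (n - p)‖ * r ^ n := by
  obtain ⟨ρ, hρ, hγρ⟩ := hγ
  set r := min ρ (|R| + 1)⁻¹
  have hr : 0 < r := lt_min hρ (by positivity)
  have hRr : |R * r| < 1 := by
    rw [abs_mul, abs_of_pos hr]
    calc |R| * r ≤ |R| * (|R| + 1)⁻¹ := by gcongr; exact min_le_right _ _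
      _ < 1 := by rw [← div_eq_mul_inv, div_lt_one (by positivity)]; linarith
  refine ⟨r, hr, summable_norm_factorial_inv_mul_sum_mul_pow c γ hr.le ?_ ?_⟩
  · refine .of_nonneg_of_le (fun p => by positivity) (fun p => ?_)
      ((summable_geometric_of_abs_lt_one hRr).mul_left C)
    rw [mul_pow, ← mul_assoc]
    gcongr
    exact (div_le_iff₀ (by positivity)).mpr (hc p)
  · exact .of_nonneg_of_le (fun q => by positivity)
      (fun q => by gcongr; exact min_le_left _ _) hγρ

/-- For a power series `S(b) = Σ c_p b^p` with `|c_p| ≤ C·R^p·p!` (some `R > 1`),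
its action `S(b)[f] = Σ_n (1/n!)(Σ_{p=0}^n (n-p)!·c_p·γ_{n-p}) s^n` on a
convergent power series `f(s) = Σ γ_q s^q` has positive radius of convergence. -/
theorem stmt5 (c γ : ℕ → ℂ) (R C : ℝ) (hR : 1 < R) (hC : 0 < C)
    (hc : ∀ p : ℕ, ‖c p‖ ≤ C * R ^ p * p.factorial)
    (hγ : ∃ ρ : ℝ, 0 < ρ ∧ Summable fun q : ℕ => ‖γ q‖ * ρ ^ q) :
    ∃ r : ℝ, 0 < r ∧ Summable fun n : ℕ =>
      ‖(n.factorial : ℂ)⁻¹ *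
        ∑ p ∈ Finset.range (n + 1), ((n - p).factorial : ℂ) * c p * γ (n - p)‖ * r ^ n :=
  stmt5_general c γ R C hc hγ
end

section
/- Let F be a module over B = ℂ⟦b⟧ with a-action satisfying ab - ba = b², and suppose F = B[a]·x is generated by x with F/F_r ≅ E_α for a normal corank-1 submodule F_r, where x maps to the standard generator e_α. Then y := (a - αb)x generates F_r as a B[a]-module. -/
/-!
If `π x = 1`, every `u` splits as `u = p u + π u • x` with `p u := u - π u • x ∈ ker π`; this
is the division of `P(a) x` by `a - c` with remainder in `A`. The Leibniz rule for `a` and the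
compatibility of `π` with the `a`-actions give `p (a u) = a (p u) + π u • y` for
`y = a x - c • x`. Hence for an `a`-stable `G ∋ y` the preimage `p⁻¹ G` is `a`-stable and
contains `x`, so it is all of `E`, and `p` fixes `ker π` pointwise.
-/

namespace DerivationModule

variable {k A E : Type*} [CommRing k] [CommRing A] [Algebra k A]
  [AddCommGroup E] [Module A E]

/-- The projection onto `ker π` along `A ∙ x` when `π x = 1`. -/
def kerProj (π : E →ₗ[A] A) (x : E) : E →ₗ[A] E :=
  LinearMap.id - π.smulRight x

@[simp]
theorem kerProj_apply (π : E →ₗ[A] A) (x v : E) : kerProj π x v = v - π v • x := rfl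

theorem kerProj_self {π : E →ₗ[A] A} {x : E} (hx : π x = 1) : kerProj π x x = 0 := by
  simp [hx]

theorem kerProj_of_mem_ker (π : E →ₗ[A] A) (x : E) {v : E} (hv : v ∈ LinearMap.ker π) :
    kerProj π x v = v := by
  simp [LinearMap.mem_ker.mp hv]

variable {δ : Derivation k A A} {a : E →+ E} {c : A} {π : E →ₗ[A] A}

theorem sub_smul_mem_ker (hπa : ∀ v, π (a v) = c * π v + δ (π v)) {x : E} (hx : π x = 1) :
    a x - c • x ∈ LinearMap.ker π := by
  simp [LinearMap.mem_ker, hπa, hx]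

theorem kerProj_map (ha : ∀ (S : A) (v : E), a (S • v) = S • a v + δ S • v)
    (hπa : ∀ v, π (a v) = c * π v + δ (π v)) (x u : E) :
    kerProj π x (a u) = a (kerProj π x u) + π u • (a x - c • x) := by
  simp only [kerProj_apply, map_sub, ha, hπa, smul_sub, add_smul, mul_comm c, mul_smul]
  abel

theorem comap_kerProj_stable (ha : ∀ (S : A) (v : E), a (S • v) = S • a v + δ S • v)
    (hπa : ∀ v, π (a v) = c * π v + δ (π v)) (x : E) {G : Submodule A E}
    (hGa : ∀ v ∈ G, a v ∈ G) (hyG : a x - c • x ∈ G) :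
    ∀ v ∈ G.comap (kerProj π x), a v ∈ G.comap (kerProj π x) := fun u hu => by
  rw [Submodule.mem_comap, kerProj_map ha hπa]
  exact G.add_mem (hGa _ hu) (G.smul_mem _ hyG)

theorem ker_le_of_isGenerator (ha : ∀ (S : A) (v : E), a (S • v) = S • a v + δ S • v)
    (hπa : ∀ v, π (a v) = c * π v + δ (π v)) {x : E}
    (hgen : ∀ G : Submodule A E, (∀ v ∈ G, a v ∈ G) → x ∈ G → ∀ v : E, v ∈ G)
    (hx : π x = 1) {G : Submodule A E} (hGa : ∀ v ∈ G, a v ∈ G) (hyG : a x - c • x ∈ G) :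
    LinearMap.ker π ≤ G := by
  intro v hv
  have hx_mem : x ∈ G.comap (kerProj π x) := by
    simp only [Submodule.mem_comap, kerProj_self hx, G.zero_mem]
  have hv_mem := hgen _ (comap_kerProj_stable ha hπa x hGa hyG) hx_mem v
  rwa [Submodule.mem_comap, kerProj_of_mem_ker π x hv] at hv_mem

end DerivationModule

open DerivationModule in
theorem stmt15_general (E : Type*) [AddCommGroup E] [Module (PowerSeries ℂ) E]
    (a : E →+ E)
    (ha : ∀ (S : PowerSeries ℂ) (x : E),
      a (S • x) = S • a x + (PowerSeries.X ^ 2 * PowerSeries.derivative ℂ S) • x)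
    (α : ℂ) (x : E)
    (hgen : ∀ G : Submodule (PowerSeries ℂ) E,
      (∀ v ∈ G, a v ∈ G) → x ∈ G → ∀ v : E, v ∈ G)
    (π : E →ₗ[PowerSeries ℂ] PowerSeries ℂ)
    (hπx : π x = 1)
    (hπa : ∀ v : E, π (a v) =
      PowerSeries.C α * (PowerSeries.X * π v) +
        PowerSeries.X ^ 2 * PowerSeries.derivative ℂ (π v)) :
    (a x - (PowerSeries.C α * PowerSeries.X) • x) ∈ LinearMap.ker π ∧
    ∀ G : Submodule (PowerSeries ℂ) E, (∀ v ∈ G, a v ∈ G) →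
      (a x - (PowerSeries.C α * PowerSeries.X) • x) ∈ G → LinearMap.ker π ≤ G := by
  set δ : Derivation ℂ (PowerSeries ℂ) (PowerSeries ℂ) :=
    (PowerSeries.X : PowerSeries ℂ) ^ 2 • PowerSeries.derivative ℂ
  have hπa' : ∀ v, π (a v) = PowerSeries.C α * PowerSeries.X * π v + δ (π v) := fun v => by
    rw [hπa, mul_assoc]
    rfl
  exact ⟨sub_smul_mem_ker hπa' hπx,
    fun G hGa hyG => ker_le_of_isGenerator (δ := δ) ha hπa' hgen hπx hGa hyG⟩

/-- Let `F` be an (a,b)-module generated over `B[a]` by `x` (a fresco), with a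
surjective `B`-linear map `π : F → E_α` (modeled on `B = ℂ⟦b⟧` with a-action
`a·S = α·b·S + b²·S'`) sending `x` to the generator `e_α = 1` and intertwining
the a-actions, so that `F_r = ker π` is a normal corank-1 submodule.
Then `y := (a - αb)x` generates `F_r` as a `B[a]`-module: `y ∈ F_r` and `F_r`
is contained in every `a`-stable submodule containing `y`. -/
theorem stmt15 (E : Type*) [AddCommGroup E] [Module (PowerSeries ℂ) E]
    (a : E →+ E)
    (ha : ∀ (S : PowerSeries ℂ) (x : E),
      a (S • x) = S • a x + (PowerSeries.X ^ 2 * PowerSeries.derivative ℂ S) • x)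
    (α : ℂ) (x : E)
    (hgen : ∀ G : Submodule (PowerSeries ℂ) E,
      (∀ v ∈ G, a v ∈ G) → x ∈ G → ∀ v : E, v ∈ G)
    (π : E →ₗ[PowerSeries ℂ] PowerSeries ℂ)
    (hπsurj : Function.Surjective π) (hπx : π x = 1)
    (hπa : ∀ v : E, π (a v) =
      PowerSeries.C α * (PowerSeries.X * π v) +
        PowerSeries.X ^ 2 * PowerSeries.derivative ℂ (π v)) :
    (a x - (PowerSeries.C α * PowerSeries.X) • x) ∈ LinearMap.ker π ∧
    ∀ G : Submodule (PowerSeries ℂ) E, (∀ v ∈ G, a v ∈ G) →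
      (a x - (PowerSeries.C α * PowerSeries.X) • x) ∈ G → LinearMap.ker π ≤ G :=
  stmt15_general E a ha α x hgen π hπx hπa
end
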